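/- For integers h, p ≥ 3, the map on cells induced by the node map ρ_möb^{h,p} restricted to the nodes [h] × [2p] of the cylinder CC Cyl_{h,2p} is a CC covering of the Möbius strip CC Möb_{h,p} by Cyl_{h,2p}. -/

import Mathlib

/-! Basic framework: combinatorial complexes, natural neighborhood functions,
CC coverings, Hasse graphs, and higher-order message-passing (HOMP) models. -/

namespace TDL

/-- The raw data of a combinatorial complex over an ambient node type `S`:
a set of cells (finite, nonempty subsets of nodes) and a rank function. -/
structure PreCC (S : Type*) where
  cells : Set (Finset S)
  rk : Finset S → ℕ

/-- A (featureless) combinatorial complex.  The node set is implicitly the set of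
elements appearing in cells; every singleton of such a node is a cell of rank `0`,
cells are nonempty, there are finitely many cells, and the rank function is
monotone with respect to inclusion. -/
structure CC (S : Type*) extends PreCC S where
  cells_finite : cells.Finite
  nonempty_of_mem : ∀ x ∈ cells, x.Nonempty
  singleton_mem : ∀ x ∈ cells, ∀ s ∈ x, ({s} : Finset S) ∈ cells
  rk_singleton : ∀ s : S, ({s} : Finset S) ∈ cells → rk {s} = 0
  rk_mono : ∀ x ∈ cells, ∀ y ∈ cells, x ⊆ y → rk x ≤ rk y

/-- Names of the natural neighborhood functions: `(r₁,r₂)`-adjacency,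
coadjacency, incidence and co-incidence. -/
inductive NbhdKind : Type
  | adj (r₁ r₂ : ℕ)
  | coadj (r₁ r₂ : ℕ)
  | inc (r₁ r₂ : ℕ)
  | coinc (r₁ r₂ : ℕ)
  deriving DecidableEq

/-- The two ranks mentioned by a neighborhood kind are bounded by `ℓ`. -/
def NbhdKind.bounded (ℓ : ℕ) : NbhdKind → Prop
  | .adj r₁ r₂ => r₁ ≤ ℓ ∧ r₂ ≤ ℓ
  | .coadj r₁ r₂ => r₁ ≤ ℓ ∧ r₂ ≤ ℓ
  | .inc r₁ r₂ => r₁ ≤ ℓ ∧ r₂ ≤ ℓ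
  | .coinc r₁ r₂ => r₁ ≤ ℓ ∧ r₂ ≤ ℓ

namespace PreCC

variable {S : Type*}

/-- The `r`-skeleton: the set of cells of rank `r`. -/
def skel (X : PreCC S) (r : ℕ) : Set (Finset S) := {x | x ∈ X.cells ∧ X.rk x = r}

/-- The natural neighborhood functions of a complex. -/
def nbhd (X : PreCC S) : NbhdKind → Finset S → Set (Finset S)
  | .adj r₁ r₂, x => {y | x ∈ X.skel r₁ ∧ y ∈ X.skel r₁ ∧ ∃ z ∈ X.skel r₂, x ⊆ z ∧ y ⊆ z}
  | .coadj r₁ r₂, x => {y | x ∈ X.skel r₁ ∧ y ∈ X.skel r₁ ∧ ∃ z ∈ X.skel r₂, z ⊆ x ∧ z ⊆ y}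
  | .inc r₁ r₂, x => {y | x ∈ X.skel r₁ ∧ y ∈ X.skel r₂ ∧ x ⊆ y}
  | .coinc r₁ r₂, x => {y | x ∈ X.skel r₁ ∧ y ∈ X.skel r₂ ∧ y ⊆ x}

/-- The Hasse graph of a complex: vertices are cells, and `x, y` are joined by an
edge whenever `x ⊆ y` and `rk x = rk y - 1` (or symmetrically). -/
def hasse (X : PreCC S) : SimpleGraph {x : Finset S // x ∈ X.cells} where
  Adj a b := (a.1 ⊆ b.1 ∧ X.rk a.1 + 1 = X.rk b.1) ∨ (b.1 ⊆ a.1 ∧ X.rk b.1 + 1 = X.rk a.1)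
  symm := by
    constructor
    rintro a b (h | h)
    · exact Or.inr h
    · exact Or.inl h
  loopless := by constructor; rintro a (⟨-, h⟩ | ⟨-, h⟩) <;> omega

end PreCC

/-- `ρ` is a CC covering of `X` by `Xt`: it maps cells of `Xt` to cells of `X`
surjectively, preserves ranks, and is a local isomorphism with respect to every
natural neighborhood function. -/
structure IsCovering {S' S : Type*} (Xt : PreCC S') (X : PreCC S)
    (ρ : Finset S' → Finset S) : Prop where
  mem : ∀ x' ∈ Xt.cells, ρ x' ∈ X.cells
  surj : ∀ x ∈ X.cells, ∃ x' ∈ Xt.cells, ρ x' = x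
  rank : ∀ x' ∈ Xt.cells, X.rk (ρ x') = Xt.rk x'
  locBij : ∀ x' ∈ Xt.cells, ∀ N : NbhdKind, Set.BijOn ρ (Xt.nbhd N x') (X.nbhd N (ρ x'))

open Classical in
/-- The multiset underlying a finite set (junk value `0` for infinite sets). -/
noncomputable def setMultiset {α : Type*} (s : Set α) : Multiset α :=
  if h : s.Finite then h.toFinset.val else 0

/-- A higher-order message-passing (HOMP) model over a feature space `D`, for
featureless complexes of dimension at most `ℓ`: a number of layers `T`, an initial
constant feature, and, per layer, message functions (per neighborhood function and
rank), permutation-invariant aggregations (functions of multisets), a combination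
operator over the family of neighborhood functions with ranks at most `ℓ`,
activations, and a readout defined on multisets. -/
structure HOMP (D : Type*) (ℓ : ℕ) where
  T : ℕ
  init : D
  msg : ℕ → NbhdKind → ℕ → D → D → D
  agg : ℕ → NbhdKind → Multiset D → D
  comb : ℕ → ({N : NbhdKind // N.bounded ℓ} → D) → D
  act : ℕ → D → D
  readout : Multiset D → D

namespace HOMP

variable {D : Type*} {ℓ : ℕ} {S : Type*}

/-- The cell feature maps computed by a HOMP model on a complex:
`h⁰_x` is the initial constant, and
`h^{t+1}_x = β_t (⊗_N (⊕ {{ m_{t,N,rk x}(h^t_x, h^t_y) : y ∈ N(x) }}))`. -/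
noncomputable def feat (M : HOMP D ℓ) (X : PreCC S) : ℕ → Finset S → D
  | 0, _ => M.init
  | t + 1, x =>
      M.act t <| M.comb t fun N =>
        M.agg t N.1 <|
          (setMultiset (X.nbhd N.1 x)).map fun y =>
            M.msg t N.1 (X.rk x) (M.feat X t x) (M.feat X t y)

/-- The output of a HOMP model: the readout of the multiset of final features. -/
noncomputable def out (M : HOMP D ℓ) (X : PreCC S) : D :=
  M.readout <| (setMultiset X.cells).map fun x => M.feat X M.T x

end HOMP

end TDL

namespace TDL

/-- The residue of `n` modulo `p` taken in `{1, …, p}`. -/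
def residue (p n : ℕ) : ℕ := (n - 1) % p + 1

/-- The node map `ρ_cyl^{h,p}(s₁, s₂) = (s₁, s₂ mod p)`, residues in `{1,…,p}`. -/
def rhoCyl (p : ℕ) (s : ℕ × ℕ) : ℕ × ℕ := (s.1, residue p s.2)

/-- The node map `ρ_möb^{h,p}`: `(s₁, s₂ mod p)` if `s₂ mod 2p ≤ p`, and
`(h + 1 − s₁, s₂ mod p)` otherwise, residues taken in `{1,…,p}` and `{1,…,2p}`. -/
def rhoMob (h p : ℕ) (s : ℕ × ℕ) : ℕ × ℕ :=
  if residue (2 * p) s.2 ≤ p then (s.1, residue p s.2) else (h + 1 - s.1, residue p s.2)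

/-- The node set `[h] × [p]`. -/
def gridNodes (h p : ℕ) : Set (ℕ × ℕ) :=
  {s | 1 ≤ s.1 ∧ s.1 ≤ h ∧ 1 ≤ s.2 ∧ s.2 ≤ p}

/-- Coordinatewise addition of `k ∈ {0,1}²` to a node. -/
def addK (s : ℕ × ℕ) (k : Bool × Bool) : ℕ × ℕ :=
  (s.1 + (if k.1 then 1 else 0), s.2 + (if k.2 then 1 else 0))

/-- The cell `s_k = { ρ(s + k') : k' ∈ {0,1}², k' ≤ k }`. -/
def stripCell (ρ : ℕ × ℕ → ℕ × ℕ) (s : ℕ × ℕ) (k : Bool × Bool) : Finset (ℕ × ℕ) :=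
  (Finset.univ.filter fun k' : Bool × Bool => k'.1 ≤ k.1 ∧ k'.2 ≤ k.2).image
    fun k' => ρ (addK s k')

/-- The rank `k₁ + k₂` of the cell `s_k`. -/
def stripRank (k : Bool × Bool) : ℕ :=
  (if k.1 then 1 else 0) + (if k.2 then 1 else 0)

/-- The complex with node set `[h] × [p]` glued via the node map `ρ`: for
`r ∈ {0,1,2}` its `r`-cells are the sets `s_k` with `s ∈ [h] × [p]`,
`k ∈ {0,1}²`, `k₁ + k₂ = r` and `ρ(s + k) ∈ [h] × [p]`. -/
noncomputable def stripPre (h p : ℕ) (ρ : ℕ × ℕ → ℕ × ℕ) : PreCC (ℕ × ℕ) where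
  cells := {x | ∃ s ∈ gridNodes h p, ∃ k : Bool × Bool,
    ρ (addK s k) ∈ gridNodes h p ∧ x = stripCell ρ s k}
  rk x := sInf {r | ∃ s ∈ gridNodes h p, ∃ k : Bool × Bool,
    ρ (addK s k) ∈ gridNodes h p ∧ x = stripCell ρ s k ∧ r = stripRank k}

/-- The cylinder combinatorial complex `Cyl_{h,p}`. -/
noncomputable def cylPre (h p : ℕ) : PreCC (ℕ × ℕ) := stripPre h p (rhoCyl p)

/-- The Möbius strip combinatorial complex `Möb_{h,p}`. -/
noncomputable def mobPre (h p : ℕ) : PreCC (ℕ × ℕ) := stripPre h p (rhoMob h p)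

end TDL

namespace TDL

/-!
`Cyl_{h,2p}` is a double cover of `Möb_{h,p}` whose deck involution
`τ(s₁, s₂) = (h + 1 − s₁, s₂ + p mod 2p)` reflects the rows and turns the cylinder by half a
revolution: `ρ_möb` identifies exactly the pairs `{u, τ u}`. A cell spans at most two adjacent
columns while `τ` shifts columns by `p ≥ 3`, so no two cells sharing a node contain both `u` and
`τ u`. Hence an inclusion `ρ x ⊆ ρ y` lifts to `x ⊆ y` or to `x ⊆ τ y`, but never to both inside
a neighborhood, which is what makes every natural neighborhood function correspond bijectively.
Ranks agree because in both complexes a cell of rank `r` has `2 ^ r` nodes.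
-/

section TwoSheeted

variable {V W : Type*} [DecidableEq V] [DecidableEq W]

structure IsTwoSheeted (Xt : PreCC V) (X : PreCC W) (ρ : V → W) (τ : V → V) : Prop where
  image_mem : ∀ x ∈ Xt.cells, x.image ρ ∈ X.cells
  exists_image_eq : ∀ y ∈ X.cells, ∃ x ∈ Xt.cells, x.image ρ = y
  rk_image : ∀ x ∈ Xt.cells, X.rk (x.image ρ) = Xt.rk x
  nonempty : ∀ x ∈ Xt.cells, x.Nonempty
  image_deck_mem : ∀ x ∈ Xt.cells, x.image τ ∈ Xt.cells
  rk_image_deck : ∀ x ∈ Xt.cells, Xt.rk (x.image τ) = Xt.rk x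
  deck_deck : ∀ x ∈ Xt.cells, ∀ u ∈ x, τ (τ u) = u
  map_deck : ∀ x ∈ Xt.cells, ∀ u ∈ x, ρ (τ u) = ρ u
  fiber : ∀ x ∈ Xt.cells, ∀ y ∈ Xt.cells, ∀ u ∈ x, ∀ v ∈ y, ρ u = ρ v → v = u ∨ v = τ u
  separated : ∀ x ∈ Xt.cells, ∀ y ∈ Xt.cells, ∀ a ∈ x, ∀ b ∈ x, b ∈ y → τ a ∉ y

namespace IsTwoSheeted

variable {Xt : PreCC V} {X : PreCC W} {ρ : V → W} {τ : V → V}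

theorem image_mem_skel_iff (H : IsTwoSheeted Xt X ρ τ) {x : Finset V} (hx : x ∈ Xt.cells)
    {r : ℕ} : x.image ρ ∈ X.skel r ↔ x ∈ Xt.skel r :=
  ⟨fun h => ⟨hx, (H.rk_image x hx).symm.trans h.2⟩,
    fun h => ⟨H.image_mem x hx, (H.rk_image x hx).trans h.2⟩⟩

theorem image_deck_mem_skel (H : IsTwoSheeted Xt X ρ τ) {x : Finset V} {r : ℕ}
    (hx : x ∈ Xt.skel r) : x.image τ ∈ Xt.skel r :=
  ⟨H.image_deck_mem x hx.1, (H.rk_image_deck x hx.1).trans hx.2⟩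

theorem image_image_deck (H : IsTwoSheeted Xt X ρ τ) {x : Finset V} (hx : x ∈ Xt.cells) :
    (x.image τ).image ρ = x.image ρ := by
  rw [Finset.image_image]
  exact Finset.image_congr fun u hu => H.map_deck x hx u hu

theorem subset_or_deck_subset (H : IsTwoSheeted Xt X ρ τ) {x y : Finset V}
    (hx : x ∈ Xt.cells) (hy : y ∈ Xt.cells) (hxy : x.image ρ ⊆ y.image ρ) :
    x ⊆ y ∨ ∀ u ∈ x, τ u ∈ y := by
  have lift : ∀ u ∈ x, u ∈ y ∨ τ u ∈ y := by
    intro u hu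
    obtain ⟨v, hv, hvu⟩ := Finset.mem_image.1 (hxy (Finset.mem_image_of_mem ρ hu))
    rcases H.fiber x hx y hy u hu v hv hvu.symm with rfl | rfl
    exacts [Or.inl hv, Or.inr hv]
  obtain ⟨s, hs⟩ := H.nonempty x hx
  rcases lift s hs with hsy | hsy
  · refine Or.inl fun u hu => (lift u hu).resolve_right ?_
    exact H.separated x hx y hy u hu s hs hsy
  · refine Or.inr fun u hu => (lift u hu).resolve_left fun huy => ?_
    exact H.separated x hx y hy s hs u hu huy hsy

theorem exists_lift_superset (H : IsTwoSheeted Xt X ρ τ) {x : Finset V} (hx : x ∈ Xt.cells)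
    {y : Finset W} {r : ℕ} (hy : y ∈ X.skel r) (hxy : x.image ρ ⊆ y) :
    ∃ y' ∈ Xt.skel r, y'.image ρ = y ∧ x ⊆ y' := by
  obtain ⟨y', hy', rfl⟩ := H.exists_image_eq y hy.1
  have hy'r : y' ∈ Xt.skel r := (H.image_mem_skel_iff hy').1 hy
  rcases H.subset_or_deck_subset hx hy' hxy with hsub | hdeck
  · exact ⟨y', hy'r, rfl, hsub⟩
  refine ⟨y'.image τ, H.image_deck_mem_skel hy'r, H.image_image_deck hy', ?_⟩
  intro u hu
  rw [← H.deck_deck x hx u hu]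
  exact Finset.mem_image_of_mem τ (hdeck u hu)

theorem exists_lift_subset (H : IsTwoSheeted Xt X ρ τ) {x : Finset V} (hx : x ∈ Xt.cells)
    {y : Finset W} {r : ℕ} (hy : y ∈ X.skel r) (hyx : y ⊆ x.image ρ) :
    ∃ y' ∈ Xt.skel r, y'.image ρ = y ∧ y' ⊆ x := by
  obtain ⟨y', hy', rfl⟩ := H.exists_image_eq y hy.1
  have hy'r : y' ∈ Xt.skel r := (H.image_mem_skel_iff hy').1 hy
  rcases H.subset_or_deck_subset hy' hx hyx with hsub | hdeck
  · exact ⟨y', hy'r, rfl, hsub⟩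
  refine ⟨y'.image τ, H.image_deck_mem_skel hy'r, H.image_image_deck hy', ?_⟩
  simpa only [Finset.image_subset_iff] using hdeck

theorem injOn_image (H : IsTwoSheeted Xt X ρ τ) {S : Set (Finset V)} (hS : S ⊆ Xt.cells)
    (hsep : ∀ y₁ ∈ S, ∀ y₂ ∈ S, ∃ u ∈ y₁, τ u ∉ y₂) : S.InjOn (·.image ρ) := by
  intro y₁ hy₁ y₂ hy₂ himage
  have sub : ∀ y₁ ∈ S, ∀ y₂ ∈ S, y₁.image ρ = y₂.image ρ → y₁ ⊆ y₂ := by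
    intro y₁ hy₁ y₂ hy₂ himage
    obtain ⟨u, hu, hτu⟩ := hsep y₁ hy₁ y₂ hy₂
    exact (H.subset_or_deck_subset (hS hy₁) (hS hy₂) himage.le).resolve_right
      fun h => hτu (h u hu)
  exact (sub y₁ hy₁ y₂ hy₂ himage).antisymm (sub y₂ hy₂ y₁ hy₁ himage.symm)

theorem bijOn_adj (H : IsTwoSheeted Xt X ρ τ) {x : Finset V} (hx : x ∈ Xt.cells) (r₁ r₂ : ℕ) :
    Set.BijOn (·.image ρ) (Xt.nbhd (.adj r₁ r₂) x) (X.nbhd (.adj r₁ r₂) (x.image ρ)) := by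
  refine ⟨?_, H.injOn_image (fun y hy => hy.2.1.1) ?_, ?_⟩
  · rintro y ⟨hx₁, hy, z, hz, hxz, hyz⟩
    exact ⟨(H.image_mem_skel_iff hx).2 hx₁, (H.image_mem_skel_iff hy.1).2 hy, _,
      (H.image_mem_skel_iff hz.1).2 hz, Finset.image_subset_image hxz,
      Finset.image_subset_image hyz⟩
  · rintro y₁ ⟨-, hy₁, z₁, hz₁, hxz₁, hyz₁⟩ y₂ ⟨-, -, z₂, hz₂, hxz₂, hyz₂⟩
    obtain ⟨a, ha⟩ := H.nonempty x hx
    obtain ⟨u, hu⟩ := H.nonempty y₁ hy₁.1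
    exact ⟨u, hu, fun hτu =>
      H.separated z₁ hz₁.1 z₂ hz₂.1 u (hyz₁ hu) a (hxz₁ ha) (hxz₂ ha) (hyz₂ hτu)⟩
  · rintro y ⟨hx₁, hy, z, hz, hxz, hyz⟩
    obtain ⟨z', hz', rfl, hxz'⟩ := H.exists_lift_superset hx hz hxz
    obtain ⟨y', hy', rfl, hyz'⟩ := H.exists_lift_subset hz'.1 hy hyz
    exact ⟨y', ⟨(H.image_mem_skel_iff hx).1 hx₁, hy', z', hz', hxz', hyz'⟩, rfl⟩

theorem bijOn_coadj (H : IsTwoSheeted Xt X ρ τ) {x : Finset V} (hx : x ∈ Xt.cells) (r₁ r₂ : ℕ) :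
    Set.BijOn (·.image ρ) (Xt.nbhd (.coadj r₁ r₂) x) (X.nbhd (.coadj r₁ r₂) (x.image ρ)) := by
  refine ⟨?_, H.injOn_image (fun y hy => hy.2.1.1) ?_, ?_⟩
  · rintro y ⟨hx₁, hy, z, hz, hzx, hzy⟩
    exact ⟨(H.image_mem_skel_iff hx).2 hx₁, (H.image_mem_skel_iff hy.1).2 hy, _,
      (H.image_mem_skel_iff hz.1).2 hz, Finset.image_subset_image hzx,
      Finset.image_subset_image hzy⟩
  · rintro y₁ ⟨-, -, z₁, hz₁, hzx₁, hzy₁⟩ y₂ ⟨-, hy₂, z₂, hz₂, hzx₂, hzy₂⟩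
    obtain ⟨a, ha⟩ := H.nonempty z₁ hz₁.1
    obtain ⟨b, hb⟩ := H.nonempty z₂ hz₂.1
    exact ⟨a, hzy₁ ha, fun hτa =>
      H.separated x hx y₂ hy₂.1 a (hzx₁ ha) b (hzx₂ hb) (hzy₂ hb) hτa⟩
  · rintro y ⟨hx₁, hy, z, hz, hzx, hzy⟩
    obtain ⟨z', hz', rfl, hzx'⟩ := H.exists_lift_subset hx hz hzx
    obtain ⟨y', hy', rfl, hzy'⟩ := H.exists_lift_superset hz'.1 hy hzy
    exact ⟨y', ⟨(H.image_mem_skel_iff hx).1 hx₁, hy', z', hz', hzx', hzy'⟩, rfl⟩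

theorem bijOn_inc (H : IsTwoSheeted Xt X ρ τ) {x : Finset V} (hx : x ∈ Xt.cells) (r₁ r₂ : ℕ) :
    Set.BijOn (·.image ρ) (Xt.nbhd (.inc r₁ r₂) x) (X.nbhd (.inc r₁ r₂) (x.image ρ)) := by
  refine ⟨?_, H.injOn_image (fun y hy => hy.2.1.1) ?_, ?_⟩
  · rintro y ⟨hx₁, hy, hxy⟩
    exact ⟨(H.image_mem_skel_iff hx).2 hx₁, (H.image_mem_skel_iff hy.1).2 hy,
      Finset.image_subset_image hxy⟩
  · rintro y₁ ⟨-, -, hxy₁⟩ y₂ ⟨-, hy₂, hxy₂⟩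
    obtain ⟨u, hu⟩ := H.nonempty x hx
    exact ⟨u, hxy₁ hu, H.separated y₂ hy₂.1 y₂ hy₂.1 u (hxy₂ hu) u (hxy₂ hu) (hxy₂ hu)⟩
  · rintro y ⟨hx₁, hy, hxy⟩
    obtain ⟨y', hy', rfl, hxy'⟩ := H.exists_lift_superset hx hy hxy
    exact ⟨y', ⟨(H.image_mem_skel_iff hx).1 hx₁, hy', hxy'⟩, rfl⟩

theorem bijOn_coinc (H : IsTwoSheeted Xt X ρ τ) {x : Finset V} (hx : x ∈ Xt.cells) (r₁ r₂ : ℕ) :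
    Set.BijOn (·.image ρ) (Xt.nbhd (.coinc r₁ r₂) x) (X.nbhd (.coinc r₁ r₂) (x.image ρ)) := by
  refine ⟨?_, H.injOn_image (fun y hy => hy.2.1.1) ?_, ?_⟩
  · rintro y ⟨hx₁, hy, hyx⟩
    exact ⟨(H.image_mem_skel_iff hx).2 hx₁, (H.image_mem_skel_iff hy.1).2 hy,
      Finset.image_subset_image hyx⟩
  · rintro y₁ ⟨-, hy₁, hyx₁⟩ y₂ ⟨-, -, hyx₂⟩
    obtain ⟨u, hu⟩ := H.nonempty y₁ hy₁.1
    exact ⟨u, hu, fun hτu => H.separated x hx x hx u (hyx₁ hu) u (hyx₁ hu) (hyx₁ hu) (hyx₂ hτu)⟩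
  · rintro y ⟨hx₁, hy, hyx⟩
    obtain ⟨y', hy', rfl, hyx'⟩ := H.exists_lift_subset hx hy hyx
    exact ⟨y', ⟨(H.image_mem_skel_iff hx).1 hx₁, hy', hyx'⟩, rfl⟩

theorem isCovering (H : IsTwoSheeted Xt X ρ τ) : IsCovering Xt X (·.image ρ) where
  mem := H.image_mem
  surj := H.exists_image_eq
  rank := H.rk_image
  locBij _ hx
    | .adj r₁ r₂ => H.bijOn_adj hx r₁ r₂
    | .coadj r₁ r₂ => H.bijOn_coadj hx r₁ r₂
    | .inc r₁ r₂ => H.bijOn_inc hx r₁ r₂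
    | .coinc r₁ r₂ => H.bijOn_coinc hx r₁ r₂

end IsTwoSheeted

end TwoSheeted

theorem one_le_residue (m n : ℕ) : 1 ≤ residue m n := Nat.le_add_left 1 _

theorem residue_le {m : ℕ} (hm : 0 < m) (n : ℕ) : residue m n ≤ m :=
  Nat.mod_lt _ hm

theorem residue_of_le_two_mul {m n : ℕ} (h₁ : 1 ≤ n) (h₂ : n ≤ 2 * m) :
    residue m n = if n ≤ m then n else n - m := by
  unfold residue
  split_ifs with h
  · rw [Nat.mod_eq_of_lt (by omega)]; omega
  · rw [Nat.mod_eq_sub_mod (by omega), Nat.mod_eq_of_lt (by omega)]; omega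

theorem residue_of_le {m n : ℕ} (h₁ : 1 ≤ n) (h₂ : n ≤ m) : residue m n = n := by
  rw [residue_of_le_two_mul h₁ (by omega), if_pos h₂]

theorem residue_residue_of_dvd {m n : ℕ} (h : n ∣ m) (a : ℕ) :
    residue n (residue m a) = residue n a := by
  simp only [residue, Nat.add_sub_cancel, Nat.mod_mod_of_dvd _ h]

theorem residue_residue_add (m : ℕ) {a : ℕ} (ha : 1 ≤ a) (j : ℕ) :
    residue m (residue m a + j) = residue m (a + j) := by
  simp only [residue, Nat.add_right_comm _ 1 j, Nat.add_sub_cancel, Nat.mod_add_mod,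
    Nat.sub_add_comm ha]

theorem rhoMob_comp_rhoCyl (h p : ℕ) : rhoMob h p ∘ rhoCyl (2 * p) = rhoMob h p := by
  funext s
  simp only [Function.comp, rhoMob, rhoCyl, residue_residue_of_dvd (dvd_refl _),
    residue_residue_of_dvd (dvd_mul_left p 2)]

theorem rhoCyl_mem_gridNodes_iff {h m : ℕ} (hm : 0 < m) {u : ℕ × ℕ} :
    rhoCyl m u ∈ gridNodes h m ↔ 1 ≤ u.1 ∧ u.1 ≤ h := by
  simp only [rhoCyl, gridNodes, Set.mem_ofPred_eq, one_le_residue, residue_le hm, and_true]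

theorem rhoMob_mem_gridNodes_iff {h p : ℕ} (hp : 0 < p) {u : ℕ × ℕ} :
    rhoMob h p u ∈ gridNodes h p ↔ 1 ≤ u.1 ∧ u.1 ≤ h := by
  unfold rhoMob
  split_ifs <;> simp only [gridNodes, Set.mem_ofPred_eq, one_le_residue, residue_le hp, and_true]
  omega

theorem mem_stripCell {ρ : ℕ × ℕ → ℕ × ℕ} {s : ℕ × ℕ} {k : Bool × Bool} {u : ℕ × ℕ} :
    u ∈ stripCell ρ s k ↔ ∃ k' : Bool × Bool, (k'.1 ≤ k.1 ∧ k'.2 ≤ k.2) ∧ ρ (addK s k') = u := by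
  simp only [stripCell, Finset.mem_image, Finset.mem_filter, Finset.mem_univ, true_and]

theorem image_stripCell (σ ρ : ℕ × ℕ → ℕ × ℕ) (s : ℕ × ℕ) (k : Bool × Bool) :
    (stripCell ρ s k).image σ = stripCell (σ ∘ ρ) s k := by
  simp only [stripCell, Finset.image_image]
  rfl

theorem stripCell_nonempty (ρ : ℕ × ℕ → ℕ × ℕ) (s : ℕ × ℕ) (k : Bool × Bool) :
    (stripCell ρ s k).Nonempty :=
  ⟨ρ (addK s (false, false)), mem_stripCell.2 ⟨_, ⟨Bool.false_le _, Bool.false_le _⟩, rfl⟩⟩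

theorem card_stripCell {ρ : ℕ × ℕ → ℕ × ℕ} {s : ℕ × ℕ}
    (hρ : Function.Injective fun k' => ρ (addK s k')) (k : Bool × Bool) :
    (stripCell ρ s k).card = 2 ^ stripRank k := by
  rw [stripCell, Finset.card_image_of_injective _ hρ]
  rcases k with ⟨_ | _, _ | _⟩ <;> rfl

theorem stripPre_rk_eq_log_card {h p : ℕ} {ρ : ℕ × ℕ → ℕ × ℕ}
    (hcard : ∀ s ∈ gridNodes h p, ∀ k, ρ (addK s k) ∈ gridNodes h p →
      (stripCell ρ s k).card = 2 ^ stripRank k)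
    {x : Finset (ℕ × ℕ)} (hx : x ∈ (stripPre h p ρ).cells) :
    (stripPre h p ρ).rk x = Nat.log 2 x.card := by
  obtain ⟨s, hs, k, hk, rfl⟩ := hx
  obtain ⟨s', hs', k', hk', hx', hr⟩ :=
    Nat.sInf_mem (⟨stripRank k, s, hs, k, hk, rfl, rfl⟩ :
      {r | ∃ s' ∈ gridNodes h p, ∃ k' : Bool × Bool, ρ (addK s' k') ∈ gridNodes h p ∧
        stripCell ρ s k = stripCell ρ s' k' ∧ r = stripRank k'}.Nonempty)
  change sInf _ = _
  rw [hr, hx', hcard s' hs' k' hk', Nat.log_pow one_lt_two]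

theorem injective_rhoCyl_addK {m : ℕ} (hm : 2 ≤ m) {s : ℕ × ℕ} (hs₁ : 1 ≤ s.2)
    (hs₂ : s.2 ≤ m) : Function.Injective fun k' => rhoCyl m (addK s k') := by
  have hcol : residue m (s.2 + 1) ≠ residue m s.2 := by
    rw [residue_of_le_two_mul (by omega) (by omega), residue_of_le hs₁ hs₂]
    split_ifs <;> omega
  rintro ⟨_ | _, _ | _⟩ ⟨_ | _, _ | _⟩ hk <;>
    simp_all [rhoCyl, addK, Prod.ext_iff, eq_comm]

theorem cylPre_rk {h m : ℕ} (hm : 2 ≤ m) {x : Finset (ℕ × ℕ)} (hx : x ∈ (cylPre h m).cells) :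
    (cylPre h m).rk x = Nat.log 2 x.card :=
  stripPre_rk_eq_log_card (fun _ hs _ _ => card_stripCell
    (injective_rhoCyl_addK hm hs.2.2.1 hs.2.2.2) _) hx

theorem addK_fst_le_addK_fst (s : ℕ × ℕ) {k k' : Bool × Bool} (hk : k'.1 ≤ k.1) :
    (addK s k').1 ≤ (addK s k).1 :=
  Nat.add_le_add_left
    ((by decide : ∀ a b : Bool, a ≤ b → (if a then 1 else 0) ≤ (if b then 1 else 0)) _ _ hk) _

theorem mem_gridNodes_of_mem_cylCell {h m : ℕ} {x : Finset (ℕ × ℕ)}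
    (hx : x ∈ (cylPre h m).cells) {u : ℕ × ℕ} (hu : u ∈ x) : u ∈ gridNodes h m := by
  obtain ⟨s, hs, k, hk, rfl⟩ := hx
  obtain ⟨k', hk', rfl⟩ := mem_stripCell.1 hu
  rw [rhoCyl_mem_gridNodes_iff (hs.2.2.1.trans hs.2.2.2)] at hk ⊢
  have := addK_fst_le_addK_fst s hk'.1
  have : s.1 ≤ (addK s k').1 := Nat.le_add_right _ _
  exact ⟨hs.1.trans this, by omega⟩

theorem exists_snd_eq_of_mem_cylCell {m : ℕ} {s : ℕ × ℕ} {k : Bool × Bool} {u : ℕ × ℕ}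
    (hu : u ∈ stripCell (rhoCyl m) s k) : ∃ j ≤ 1, u.2 = residue m (s.2 + j) := by
  obtain ⟨k', -, rfl⟩ := mem_stripCell.1 hu
  exact ⟨if k'.2 then 1 else 0, by split_ifs <;> omega, rfl⟩

def mobDeck (h p : ℕ) (u : ℕ × ℕ) : ℕ × ℕ := (h + 1 - u.1, residue (2 * p) (u.2 + p))

theorem mobDeck_of_mem_gridNodes {h p : ℕ} {u : ℕ × ℕ} (hu : u ∈ gridNodes h (2 * p)) :
    mobDeck h p u = (h + 1 - u.1, if u.2 ≤ p then u.2 + p else u.2 - p) := by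
  obtain ⟨-, -, hu₁, hu₂⟩ := hu
  rw [mobDeck, residue_of_le_two_mul (by omega) (by omega)]
  congr 1
  split_ifs <;> omega

theorem rhoMob_of_mem_gridNodes {h p : ℕ} {u : ℕ × ℕ} (hu : u ∈ gridNodes h (2 * p)) :
    rhoMob h p u = if u.2 ≤ p then u else (h + 1 - u.1, u.2 - p) := by
  obtain ⟨-, -, hu₁, hu₂⟩ := hu
  rw [rhoMob, residue_of_le hu₁ hu₂, residue_of_le_two_mul hu₁ hu₂]
  split_ifs <;> rfl

theorem mobDeck_mem_gridNodes {h p : ℕ} {u : ℕ × ℕ} (hu : u ∈ gridNodes h (2 * p)) :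
    mobDeck h p u ∈ gridNodes h (2 * p) := by
  obtain ⟨hu₁, hu₂, hu₃, hu₄⟩ := hu
  exact ⟨by dsimp [mobDeck]; omega, by dsimp [mobDeck]; omega, one_le_residue _ _,
    residue_le (by omega) _⟩

theorem mobDeck_mobDeck {h p : ℕ} {u : ℕ × ℕ} (hu : u ∈ gridNodes h (2 * p)) :
    mobDeck h p (mobDeck h p u) = u := by
  rw [mobDeck_of_mem_gridNodes (mobDeck_mem_gridNodes hu), mobDeck_of_mem_gridNodes hu]
  obtain ⟨hu₁, hu₂, hu₃, hu₄⟩ := hu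
  split_ifs <;> ext <;> dsimp only <;> omega

theorem rhoMob_mobDeck {h p : ℕ} {u : ℕ × ℕ} (hu : u ∈ gridNodes h (2 * p)) :
    rhoMob h p (mobDeck h p u) = rhoMob h p u := by
  rw [rhoMob_of_mem_gridNodes (mobDeck_mem_gridNodes hu), rhoMob_of_mem_gridNodes hu,
    mobDeck_of_mem_gridNodes hu]
  obtain ⟨hu₁, hu₂, hu₃, hu₄⟩ := hu
  split_ifs <;> ext <;> dsimp only at * <;> omega

theorem eq_or_eq_mobDeck_of_rhoMob_eq {h p : ℕ} {u v : ℕ × ℕ} (hu : u ∈ gridNodes h (2 * p))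
    (hv : v ∈ gridNodes h (2 * p)) (huv : rhoMob h p u = rhoMob h p v) :
    v = u ∨ v = mobDeck h p u := by
  rw [rhoMob_of_mem_gridNodes hu, rhoMob_of_mem_gridNodes hv] at huv
  rw [mobDeck_of_mem_gridNodes hu]
  obtain ⟨-, hu₂, -, hu₄⟩ := hu
  obtain ⟨-, hv₂, -, hv₄⟩ := hv
  split_ifs at huv ⊢ <;> simp only [Prod.ext_iff] at huv ⊢ <;> omega

theorem residue_add_half_ne {p s t j₁ j₂ j₃ j₄ : ℕ} (hp : 3 ≤ p) (hs₁ : 1 ≤ s) (hs₂ : s ≤ 2 * p)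
    (ht₁ : 1 ≤ t) (ht₂ : t ≤ 2 * p) (hj₁ : j₁ ≤ 1) (hj₂ : j₂ ≤ 1) (hj₃ : j₃ ≤ 1) (hj₄ : j₄ ≤ 1)
    (h : residue (2 * p) (s + j₂) = residue (2 * p) (t + j₃)) :
    residue (2 * p) (s + j₁ + p) ≠ residue (2 * p) (t + j₄) := by
  rw [residue_of_le_two_mul (by omega) (by omega), residue_of_le_two_mul (by omega) (by omega)]
    at h ⊢
  split_ifs at h ⊢ <;> omega

theorem mobDeck_not_mem_of_mem_cylCell {h p : ℕ} (hp : 3 ≤ p) {x y : Finset (ℕ × ℕ)}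
    (hx : x ∈ (cylPre h (2 * p)).cells) (hy : y ∈ (cylPre h (2 * p)).cells) {a b : ℕ × ℕ}
    (ha : a ∈ x) (hb : b ∈ x) (hby : b ∈ y) : mobDeck h p a ∉ y := by
  obtain ⟨s, ⟨-, -, hs₁, hs₂⟩, k, -, rfl⟩ := hx
  obtain ⟨t, ⟨-, -, ht₁, ht₂⟩, l, -, rfl⟩ := hy
  obtain ⟨j₁, hj₁, ha₂⟩ := exists_snd_eq_of_mem_cylCell ha
  obtain ⟨j₂, hj₂, hb₂⟩ := exists_snd_eq_of_mem_cylCell hb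
  obtain ⟨j₃, hj₃, hb₂'⟩ := exists_snd_eq_of_mem_cylCell hby
  intro hay
  obtain ⟨j₄, hj₄, hay₂⟩ := exists_snd_eq_of_mem_cylCell hay
  rw [mobDeck, ha₂, residue_residue_add _ (by omega)] at hay₂
  exact residue_add_half_ne hp hs₁ hs₂ ht₁ ht₂ hj₁ hj₂ hj₃ hj₄ (hb₂.symm.trans hb₂') hay₂

theorem mobDeck_rhoCyl_addK {h p : ℕ} {s : ℕ × ℕ} (hs : 1 ≤ s.2) {k₁ : Bool}
    (hk : (addK s (k₁, false)).1 ≤ h) {k' : Bool × Bool} (hk' : k'.1 ≤ k₁) :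
    mobDeck h p (rhoCyl (2 * p) (addK s k')) =
      rhoCyl (2 * p) (addK (mobDeck h p (addK s (k₁, false))) (xor k₁ k'.1, k'.2)) := by
  simp only [mobDeck, rhoCyl, addK, Prod.mk.injEq, Bool.false_eq_true, if_false, add_zero] at hk ⊢
  refine ⟨?_, ?_⟩
  · have := (by decide : ∀ a b : Bool, b ≤ a →
      (if a then 1 else 0) = (if b then 1 else 0) + (if xor a b then 1 else 0 : ℕ)) k₁ k'.1 hk'
    omega
  · rw [residue_residue_add _ (by omega), residue_residue_add _ (by omega), add_right_comm]

theorem image_mobDeck_cylCell {h p : ℕ} {s : ℕ × ℕ} (hs : 1 ≤ s.2) {k : Bool × Bool}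
    (hk : (addK s k).1 ≤ h) :
    (stripCell (rhoCyl (2 * p)) s k).image (mobDeck h p) =
      stripCell (rhoCyl (2 * p)) (mobDeck h p (addK s (k.1, false))) k := by
  have hk₁ : (addK s (k.1, false)).1 ≤ h := hk
  have hxor : ∀ k' : Bool × Bool, k'.1 ≤ k.1 → xor k.1 k'.1 ≤ k.1 := fun k' =>
    (by decide : ∀ a b : Bool, b ≤ a → xor a b ≤ a) k.1 k'.1
  ext u
  simp only [Finset.mem_image, mem_stripCell]
  constructor
  · rintro ⟨_, ⟨k', hk', rfl⟩, rfl⟩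
    exact ⟨(xor k.1 k'.1, k'.2), ⟨hxor k' hk'.1, hk'.2⟩,
      (mobDeck_rhoCyl_addK hs hk₁ hk'.1).symm⟩
  · rintro ⟨k', hk', rfl⟩
    refine ⟨_, ⟨(xor k.1 k'.1, k'.2), ⟨hxor k' hk'.1, hk'.2⟩, rfl⟩, ?_⟩
    rw [mobDeck_rhoCyl_addK hs hk₁ (hxor k' hk'.1)]
    simp

theorem image_rhoMob_cylCell (h p : ℕ) (s : ℕ × ℕ) (k : Bool × Bool) :
    (stripCell (rhoCyl (2 * p)) s k).image (rhoMob h p) = stripCell (rhoMob h p) s k := by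
  rw [image_stripCell, rhoMob_comp_rhoCyl]

theorem injOn_rhoMob_of_mem_cylPre {h p : ℕ} (hp : 3 ≤ p) {x : Finset (ℕ × ℕ)}
    (hx : x ∈ (cylPre h (2 * p)).cells) : Set.InjOn (rhoMob h p) x := by
  intro u hu v hv huv
  rcases eq_or_eq_mobDeck_of_rhoMob_eq (mem_gridNodes_of_mem_cylCell hx hu)
    (mem_gridNodes_of_mem_cylCell hx hv) huv with rfl | rfl
  · rfl
  · exact absurd hv (mobDeck_not_mem_of_mem_cylCell hp hx hx hu hu hu)

theorem mobPre_rk {h p : ℕ} (hp : 3 ≤ p) {x : Finset (ℕ × ℕ)} (hx : x ∈ (mobPre h p).cells) :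
    (mobPre h p).rk x = Nat.log 2 x.card := by
  refine stripPre_rk_eq_log_card (fun s hs k hk => ?_) hx
  have hs₂ : s.2 ≤ 2 * p := by have := hs.2.2.2; omega
  have hcyl : stripCell (rhoCyl (2 * p)) s k ∈ (cylPre h (2 * p)).cells :=
    ⟨s, ⟨hs.1, hs.2.1, hs.2.2.1, hs₂⟩, k, (rhoCyl_mem_gridNodes_iff (by omega)).2
      ((rhoMob_mem_gridNodes_iff (by omega)).1 hk), rfl⟩
  rw [← image_rhoMob_cylCell, Finset.card_image_of_injOn (injOn_rhoMob_of_mem_cylPre hp hcyl),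
    card_stripCell (injective_rhoCyl_addK (by omega) hs.2.2.1 hs₂)]

theorem mobDeck_addK_mem_gridNodes {h p : ℕ} {s : ℕ × ℕ} (hs : s ∈ gridNodes h (2 * p))
    {k : Bool × Bool} (hk : rhoCyl (2 * p) (addK s k) ∈ gridNodes h (2 * p)) :
    mobDeck h p (addK s (k.1, false)) ∈ gridNodes h (2 * p) ∧
      rhoCyl (2 * p) (addK (mobDeck h p (addK s (k.1, false))) k) ∈ gridNodes h (2 * p) := by
  have hp : 0 < 2 * p := hs.2.2.1.trans hs.2.2.2
  rw [rhoCyl_mem_gridNodes_iff hp] at hk ⊢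
  refine ⟨mobDeck_mem_gridNodes ⟨hk.1, hk.2, hs.2.2⟩, ?_⟩
  have := hs.1
  simp only [mobDeck, addK] at hk ⊢
  omega

theorem image_mobDeck_mem_cylPre {h p : ℕ} {x : Finset (ℕ × ℕ)}
    (hx : x ∈ (cylPre h (2 * p)).cells) : x.image (mobDeck h p) ∈ (cylPre h (2 * p)).cells := by
  obtain ⟨s, hs, k, hk, rfl⟩ := hx
  obtain ⟨hs', hk'⟩ := mobDeck_addK_mem_gridNodes hs hk
  rw [rhoCyl_mem_gridNodes_iff (hs.2.2.1.trans hs.2.2.2)] at hk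
  exact ⟨_, hs', k, hk', image_mobDeck_cylCell hs.2.2.1 hk.2⟩

theorem image_image_mobDeck {h p : ℕ} {x : Finset (ℕ × ℕ)} (hx : x ∈ (cylPre h (2 * p)).cells) :
    (x.image (mobDeck h p)).image (rhoMob h p) = x.image (rhoMob h p) := by
  rw [Finset.image_image]
  exact Finset.image_congr fun u hu => rhoMob_mobDeck (mem_gridNodes_of_mem_cylCell hx hu)

theorem image_rhoMob_mem_mobPre {h p : ℕ} {x : Finset (ℕ × ℕ)}
    (hx : x ∈ (cylPre h (2 * p)).cells) : x.image (rhoMob h p) ∈ (mobPre h p).cells := by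
  have lower : ∀ s ∈ gridNodes h (2 * p), ∀ k, rhoCyl (2 * p) (addK s k) ∈ gridNodes h (2 * p) →
      s.2 ≤ p → (stripCell (rhoCyl (2 * p)) s k).image (rhoMob h p) ∈ (mobPre h p).cells := by
    intro s hs k hk hsp
    have hp : 0 < p := hs.2.2.1.trans hsp
    rw [rhoCyl_mem_gridNodes_iff (by omega), ← rhoMob_mem_gridNodes_iff hp] at hk
    exact ⟨s, ⟨hs.1, hs.2.1, hs.2.2.1, hsp⟩, k, hk, image_rhoMob_cylCell h p s k⟩
  obtain ⟨s, hs, k, hk, rfl⟩ := hx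
  by_cases hsp : s.2 ≤ p
  · exact lower s hs k hk hsp
  obtain ⟨hs', hk'⟩ := mobDeck_addK_mem_gridNodes hs hk
  rw [← image_image_mobDeck ⟨s, hs, k, hk, rfl⟩]
  rw [rhoCyl_mem_gridNodes_iff (hs.2.2.1.trans hs.2.2.2)] at hk
  rw [image_mobDeck_cylCell hs.2.2.1 hk.2]
  refine lower _ hs' k hk' ?_
  rw [mobDeck_of_mem_gridNodes (u := addK s (k.1, false)) ⟨hk.1, hk.2, hs.2.2⟩]
  simp only [addK, Bool.false_eq_true, if_false, add_zero]
  have := hs.2.2.2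
  rw [if_neg hsp]
  omega

theorem isTwoSheeted_cylPre_mobPre {h p : ℕ} (hp : 3 ≤ p) :
    IsTwoSheeted (cylPre h (2 * p)) (mobPre h p) (rhoMob h p) (mobDeck h p) where
  image_mem _ := image_rhoMob_mem_mobPre
  exists_image_eq := by
    rintro _ ⟨s, hs, k, hk, rfl⟩
    rw [rhoMob_mem_gridNodes_iff (by omega),
      ← rhoCyl_mem_gridNodes_iff (m := 2 * p) (by omega)] at hk
    exact ⟨_, ⟨s, ⟨hs.1, hs.2.1, hs.2.2.1, hs.2.2.2.trans (by omega)⟩, k, hk, rfl⟩,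
      image_rhoMob_cylCell h p s k⟩
  rk_image x hx := by
    rw [mobPre_rk hp (image_rhoMob_mem_mobPre hx), cylPre_rk (by omega) hx,
      Finset.card_image_of_injOn (injOn_rhoMob_of_mem_cylPre hp hx)]
  nonempty := by
    rintro _ ⟨s, -, k, -, rfl⟩
    exact stripCell_nonempty _ s k
  image_deck_mem _ := image_mobDeck_mem_cylPre
  rk_image_deck x hx := by
    have hinj : Set.InjOn (mobDeck h p) x :=
      Set.LeftInvOn.injOn fun u hu => mobDeck_mobDeck (mem_gridNodes_of_mem_cylCell hx hu)
    rw [cylPre_rk (by omega) (image_mobDeck_mem_cylPre hx), cylPre_rk (by omega) hx,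
      Finset.card_image_of_injOn hinj]
  deck_deck x hx _ hu := mobDeck_mobDeck (mem_gridNodes_of_mem_cylCell hx hu)
  map_deck x hx _ hu := rhoMob_mobDeck (mem_gridNodes_of_mem_cylCell hx hu)
  fiber x hx y hy _ hu _ hv := eq_or_eq_mobDeck_of_rhoMob_eq (mem_gridNodes_of_mem_cylCell hx hu)
    (mem_gridNodes_of_mem_cylCell hy hv)
  separated _ hx _ hy _ ha _ hb hby := mobDeck_not_mem_of_mem_cylCell hp hx hy ha hb hby

theorem mob_covering_general (h p : ℕ) (hp : 3 ≤ p) :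
    IsCovering (cylPre h (2 * p)) (mobPre h p) (fun x => x.image (rhoMob h p)) :=
  (isTwoSheeted_cylPre_mobPre hp).isCovering

/-- For `h, p ≥ 3`, the map on cells induced by the node map `ρ_möb^{h,p}`
(restricted to the nodes `[h] × [2p]`) is a CC covering of the Möbius strip
`Möb_{h,p}` by the cylinder `Cyl_{h,2p}`. -/
theorem mob_covering (h p : ℕ) (hh : 3 ≤ h) (hp : 3 ≤ p) :
    IsCovering (cylPre h (2 * p)) (mobPre h p) (fun x => x.image (rhoMob h p)) :=
  mob_covering_general h p hp

end TDL
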